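/- arXiv:0907.3438 — 7 statements merged into one kernel-verified Lean document; each statement's English description precedes it below -/
import Mathlib

section
/- The Babuška inf-sup constant γ := inf over (u,p) ∈ V × Q with (u,p) ≠ (0,0) of sup over (v,q) ∈ V × Q with (v,q) ≠ (0,0) of (a(u,v) + b(v,p) + b(u,q)) / (‖(u,p)‖·‖(v,q)‖) satisfies γ = min{ |λ| : λ ∈ ℝ and there exists (u,p) ∈ V × Q with (u,p) ≠ (0,0) such that a(u,v) + b(v,p) + b(u,q) = λ(⟨u,v⟩ + ⟨p,q⟩) for all (v,q) ∈ V × Q }; in particular this set of eigenvalues is nonempty and the minimum is attained. -/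
/-! The Babuška form `B((u,p),(v,q)) = a(u,v) + b(v,p) + b(u,q)` is symmetric, so on `V × Q` with
the ℓ² inner product it is represented by a self-adjoint operator `T`. For `w ≠ 0` the inner
supremum is `‖T w‖ / ‖w‖`; expanding in an orthonormal eigenbasis of `T` shows this is at least the
smallest modulus `|μ₀|` of an eigenvalue, with equality at an eigenvector for `μ₀`. Hence the
inf-sup constant is `|μ₀|`, and every eigenvalue `μ` satisfies `|μ₀| ≤ |μ|`. -/

open scoped InnerProductSpace

section SymmetricOperator

variable {E : Type*} [NormedAddCommGroup E] [InnerProductSpace ℝ E]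

theorem isGreatest_inner_div_const_mul_norm [Nontrivial E] (x : E) {c : ℝ} (hc : 0 < c) :
    IsGreatest (Set.range fun y : {y : E // y ≠ 0} => ⟪x, y.1⟫_ℝ / (c * ‖y.1‖)) (‖x‖ / c) := by
  refine ⟨?_, ?_⟩
  · by_cases hx : x = 0
    · obtain ⟨y, hy⟩ := exists_ne (0 : E)
      exact ⟨⟨y, hy⟩, by simp [hx]⟩
    · refine ⟨⟨x, hx⟩, ?_⟩
      have : 0 < ‖x‖ := norm_pos_iff.mpr hx
      simp only [real_inner_self_eq_norm_sq]
      field_simp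
  · rintro _ ⟨⟨y, hy⟩, rfl⟩
    have : 0 < ‖y‖ := norm_pos_iff.mpr hy
    calc ⟪x, y⟫_ℝ / (c * ‖y‖) ≤ ‖x‖ * ‖y‖ / (c * ‖y‖) := by
          gcongr; exact real_inner_le_norm x y
      _ = ‖x‖ / c := by field_simp

theorem LinearMap.IsSymmetric.exists_eigenvector_abs_mul_norm_le [FiniteDimensional ℝ E]
    [Nontrivial E] {T : E →ₗ[ℝ] E} (hT : T.IsSymmetric) :
    ∃ μ : ℝ, ∃ w : E, w ≠ 0 ∧ T w = μ • w ∧ ∀ x, |μ| * ‖x‖ ≤ ‖T x‖ := by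
  set B := hT.eigenvectorBasis rfl
  set μ := hT.eigenvalues rfl
  have : Nonempty (Fin (Module.finrank ℝ E)) := ⟨⟨0, Module.finrank_pos⟩⟩
  obtain ⟨i₀, -, hi₀⟩ := Finset.univ.exists_min_image (fun i => |μ i|) Finset.univ_nonempty
  refine ⟨μ i₀, B i₀, B.orthonormal.ne_zero i₀, hT.apply_eigenvectorBasis rfl i₀, fun x => ?_⟩
  have norm_sq_eq (y : E) : ‖y‖ ^ 2 = ∑ i, B.repr y i ^ 2 := by
    rw [← B.repr.norm_map y, EuclideanSpace.norm_sq_eq]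
    simp only [Real.norm_eq_abs, sq_abs]
  have repr_apply (y : E) (i) : B.repr (T y) i = μ i * B.repr y i :=
    hT.eigenvectorBasis_apply_self_apply rfl y i
  refine le_of_pow_le_pow_left₀ two_ne_zero (norm_nonneg _) ?_
  rw [mul_pow, norm_sq_eq, norm_sq_eq, Finset.mul_sum]
  gcongr with i
  rw [repr_apply, mul_pow, ← sq_abs (μ i)]
  exact mul_le_mul_of_nonneg_right
    (pow_le_pow_left₀ (abs_nonneg _) (hi₀ i (Finset.mem_univ i)) 2) (sq_nonneg _)

theorem LinearMap.IsSymmetric.isLeast_abs_eigenvalue_iInf_norm_apply_div_norm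
    [FiniteDimensional ℝ E] [Nontrivial E] {T : E →ₗ[ℝ] E} (hT : T.IsSymmetric) :
    IsLeast {r : ℝ | ∃ μ : ℝ, r = |μ| ∧ ∃ w : E, w ≠ 0 ∧ T w = μ • w}
      (⨅ w : {w : E // w ≠ 0}, ‖T w.1‖ / ‖w.1‖) := by
  obtain ⟨μ, w, hw, hTw, hbound⟩ := hT.exists_eigenvector_abs_mul_norm_le
  have norm_apply_div_norm {ν : ℝ} {x : E} (hx : x ≠ 0) (h : T x = ν • x) :
      ‖T x‖ / ‖x‖ = |ν| := by
    rw [h, norm_smul, Real.norm_eq_abs, mul_div_cancel_right₀ _ (norm_ne_zero_iff.mpr hx)]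
  have hleast : IsLeast (Set.range fun x : {x : E // x ≠ 0} => ‖T x.1‖ / ‖x.1‖) |μ| := by
    refine ⟨⟨⟨w, hw⟩, norm_apply_div_norm hw hTw⟩, ?_⟩
    rintro _ ⟨⟨x, hx⟩, rfl⟩
    exact (le_div_iff₀ (norm_pos_iff.mpr hx)).mpr (hbound x)
  have : Nonempty {x : E // x ≠ 0} := ⟨⟨w, hw⟩⟩
  rw [hleast.isGLB.ciInf_eq]
  refine ⟨⟨μ, rfl, w, hw, hTw⟩, ?_⟩
  rintro _ ⟨ν, rfl, x, hx, hTx⟩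
  exact hleast.2 ⟨⟨x, hx⟩, norm_apply_div_norm hx hTx⟩

end SymmetricOperator

section BilinearForm

variable {E : Type*} [NormedAddCommGroup E] [InnerProductSpace ℝ E] [FiniteDimensional ℝ E]
  (β : E →ₗ[ℝ] E →ₗ[ℝ] ℝ)

noncomputable def operatorOfBilin : E →ₗ[ℝ] E :=
  (InnerProductSpace.toDual ℝ E).symm.toLinearEquiv.toLinearMap ∘ₗ
    LinearMap.toContinuousLinearMap.toLinearMap ∘ₗ β

theorem inner_operatorOfBilin (x y : E) : ⟪operatorOfBilin β x, y⟫_ℝ = β x y := by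
  simp [operatorOfBilin, InnerProductSpace.toDual_symm_apply]

variable {β}

theorem isSymmetric_operatorOfBilin (hβ : ∀ x y, β x y = β y x) :
    (operatorOfBilin β).IsSymmetric := fun x y => by
  rw [inner_operatorOfBilin, real_inner_comm, inner_operatorOfBilin, hβ]

theorem operatorOfBilin_eq_smul_iff {w : E} {μ : ℝ} :
    operatorOfBilin β w = μ • w ↔ ∀ y, β w y = μ * ⟪w, y⟫_ℝ := by
  simp only [← inner_operatorOfBilin β, ← real_inner_smul_left]
  exact ⟨fun h y => by rw [h], ext_inner_right ℝ⟩

theorem isLeast_abs_eigenvalue_iInf_iSup_div_norm_mul_norm [Nontrivial E]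
    (hβ : ∀ x y, β x y = β y x) :
    IsLeast {r : ℝ | ∃ μ : ℝ, r = |μ| ∧ ∃ w : E, w ≠ 0 ∧ ∀ y, β w y = μ * ⟪w, y⟫_ℝ}
      (⨅ w : {w : E // w ≠ 0}, ⨆ y : {y : E // y ≠ 0}, β w.1 y.1 / (‖w.1‖ * ‖y.1‖)) := by
  have hsup (w : {w : E // w ≠ 0}) :
      ⨆ y : {y : E // y ≠ 0}, β w.1 y.1 / (‖w.1‖ * ‖y.1‖) = ‖operatorOfBilin β w.1‖ / ‖w.1‖ := by
    have : Nonempty {y : E // y ≠ 0} := ⟨w⟩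
    simp only [← inner_operatorOfBilin β]
    exact (isGreatest_inner_div_const_mul_norm _ (norm_pos_iff.mpr w.2)).isLUB.ciSup_eq
  simp only [hsup, ← operatorOfBilin_eq_smul_iff]
  exact (isSymmetric_operatorOfBilin hβ).isLeast_abs_eigenvalue_iInf_norm_apply_div_norm

end BilinearForm

section Babuska

variable {V : Type*} [NormedAddCommGroup V] [InnerProductSpace ℝ V]
  {Q : Type*} [NormedAddCommGroup Q] [InnerProductSpace ℝ Q]

noncomputable def babuskaForm (a : V →ₗ[ℝ] V →ₗ[ℝ] ℝ) (b : V →ₗ[ℝ] Q →ₗ[ℝ] ℝ) :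
    WithLp 2 (V × Q) →ₗ[ℝ] WithLp 2 (V × Q) →ₗ[ℝ] ℝ :=
  let π₁ := LinearMap.fst ℝ V Q ∘ₗ (WithLp.linearEquiv 2 ℝ (V × Q)).toLinearMap
  let π₂ := LinearMap.snd ℝ V Q ∘ₗ (WithLp.linearEquiv 2 ℝ (V × Q)).toLinearMap
  a.compl₁₂ π₁ π₁ + b.flip.compl₁₂ π₂ π₁ + b.compl₁₂ π₁ π₂

theorem babuskaForm_apply (a : V →ₗ[ℝ] V →ₗ[ℝ] ℝ) (b : V →ₗ[ℝ] Q →ₗ[ℝ] ℝ)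
    (w y : WithLp 2 (V × Q)) :
    babuskaForm a b w y = a w.fst y.fst + b y.fst w.snd + b w.fst y.snd := rfl

theorem babuskaForm_comm {a : V →ₗ[ℝ] V →ₗ[ℝ] ℝ} (ha : ∀ u v, a u v = a v u)
    (b : V →ₗ[ℝ] Q →ₗ[ℝ] ℝ) (w y : WithLp 2 (V × Q)) :
    babuskaForm a b w y = babuskaForm a b y w := by
  rw [babuskaForm_apply, babuskaForm_apply, ha]
  ring

end Babuska

theorem babuska_infsup_eq_min_abs_eigenvalue_general
    {V : Type*} [NormedAddCommGroup V] [InnerProductSpace ℝ V]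
    [FiniteDimensional ℝ V] [Nontrivial V]
    {Q : Type*} [NormedAddCommGroup Q] [InnerProductSpace ℝ Q]
    [FiniteDimensional ℝ Q]
    (a : V →ₗ[ℝ] V →ₗ[ℝ] ℝ) (ha : ∀ u v, a u v = a v u)
    (b : V →ₗ[ℝ] Q →ₗ[ℝ] ℝ) :
    IsLeast
      { r : ℝ | ∃ μ : ℝ, r = |μ| ∧ ∃ up : V × Q, up ≠ 0 ∧
          ∀ (v : V) (q : Q),
            a up.1 v + b v up.2 + b up.1 q
              = μ * ((inner ℝ up.1 v : ℝ) + (inner ℝ up.2 q : ℝ)) }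
      (⨅ up : {up : V × Q // up ≠ 0}, ⨆ vq : {vq : V × Q // vq ≠ 0},
        (a up.1.1 vq.1.1 + b vq.1.1 up.1.2 + b up.1.1 vq.1.2) /
          (Real.sqrt (‖up.1.1‖ ^ 2 + ‖up.1.2‖ ^ 2) *
            Real.sqrt (‖vq.1.1‖ ^ 2 + ‖vq.1.2‖ ^ 2))) := by
  have key := isLeast_abs_eigenvalue_iInf_iSup_div_norm_mul_norm (babuskaForm_comm ha b)
  let e : {up : V × Q // up ≠ 0} ≃ {w : WithLp 2 (V × Q) // w ≠ 0} :=
    (WithLp.equiv 2 (V × Q)).symm.subtypeEquiv fun _ => (WithLp.toLp_eq_zero 2).not.symm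
  convert key using 1
  · ext r
    refine exists_congr fun μ => and_congr_right fun _ => ?_
    rw [(WithLp.equiv 2 (V × Q)).exists_congr_left]
    refine exists_congr fun up => and_congr (WithLp.toLp_eq_zero 2).not.symm ?_
    rw [(WithLp.equiv 2 (V × Q)).forall_congr_left, Prod.forall]
    rfl
  · rw [← e.iInf_comp]
    refine iInf_congr fun up => ?_
    rw [← e.iSup_comp]
    simp only [babuskaForm_apply, WithLp.prod_norm_eq_of_L2]
    rfl

/-- The Babuška inf-sup constant `γ` equals the minimum of `|λ|` over all
eigenvalues `λ` of the generalized eigenvalue problem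
`a(u,v) + b(v,p) + b(u,q) = λ(⟨u,v⟩ + ⟨p,q⟩)`; in particular the set of such
eigenvalues is nonempty and the minimum is attained. -/
theorem babuska_infsup_eq_min_abs_eigenvalue
    {V : Type*} [NormedAddCommGroup V] [InnerProductSpace ℝ V]
    [FiniteDimensional ℝ V] [Nontrivial V]
    {Q : Type*} [NormedAddCommGroup Q] [InnerProductSpace ℝ Q]
    [FiniteDimensional ℝ Q] [Nontrivial Q]
    (a : V →ₗ[ℝ] V →ₗ[ℝ] ℝ) (ha : ∀ u v, a u v = a v u)
    (b : V →ₗ[ℝ] Q →ₗ[ℝ] ℝ) :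
    IsLeast
      { r : ℝ | ∃ μ : ℝ, r = |μ| ∧ ∃ up : V × Q, up ≠ 0 ∧
          ∀ (v : V) (q : Q),
            a up.1 v + b v up.2 + b up.1 q
              = μ * ((inner ℝ up.1 v : ℝ) + (inner ℝ up.2 q : ℝ)) }
      (⨅ up : {up : V × Q // up ≠ 0}, ⨆ vq : {vq : V × Q // vq ≠ 0},
        (a up.1.1 vq.1.1 + b vq.1.1 up.1.2 + b up.1.1 vq.1.2) /
          (Real.sqrt (‖up.1.1‖ ^ 2 + ‖up.1.2‖ ^ 2) *
            Real.sqrt (‖vq.1.1‖ ^ 2 + ‖vq.1.2‖ ^ 2))) :=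
  babuska_infsup_eq_min_abs_eigenvalue_general a ha b
end

section
/- Consider the generalized eigenvalue problem: find λ ∈ ℝ and (u,p) ∈ V × Q with (u,p) ≠ (0,0) such that ⟨u,v⟩ + b(v,p) + b(u,q) = -λ⟨p,q⟩ for all (v,q) ∈ V × Q. Then the set of eigenvalues λ of this problem is nonempty, every such eigenvalue satisfies λ ≥ 0, and the Brezzi inf-sup constant β := inf over q ∈ Q with q ≠ 0 of sup over v ∈ V with v ≠ 0 of b(v,q)/(‖v‖·‖q‖) equals the square root of the smallest eigenvalue. -/
/-!
By the Riesz representation theorem there is a linear map `S : Q → V` with `b v q = ⟪S q, v⟫`.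
Testing the eigenvalue equation with `q = 0` forces `u = -S p`, after which it says exactly
`S† S p = λ p`. So the eigenvalues are those of the Gram operator `S† S`, which are nonnegative,
and the smallest one is the minimum of the Rayleigh quotient `‖S q‖² / ‖q‖²`. On the other side,
by Cauchy–Schwarz with equality at `v = S q`, `sup_v b(v, q) / ‖v‖ = ‖S q‖`, so
`β = min_q ‖S q‖ / ‖q‖`.
-/

open Module.End LinearMap

theorem nondegenerate_innerₗ (V : Type*) [NormedAddCommGroup V] [InnerProductSpace ℝ V] :
    BilinForm.Nondegenerate (innerₗ V) :=
  ⟨fun x hx => inner_self_eq_zero.1 (hx x), fun y hy => inner_self_eq_zero.1 (hy y)⟩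

section Riesz

variable {V Q : Type*} [NormedAddCommGroup V] [InnerProductSpace ℝ V] [FiniteDimensional ℝ V]
  [AddCommGroup Q] [Module ℝ Q]

noncomputable def rieszRepr (b : V →ₗ[ℝ] Q →ₗ[ℝ] ℝ) : Q →ₗ[ℝ] V :=
  (BilinForm.toDual (innerₗ V) (nondegenerate_innerₗ V)).symm.toLinearMap ∘ₗ b.flip

@[simp]
theorem inner_rieszRepr_apply (b : V →ₗ[ℝ] Q →ₗ[ℝ] ℝ) (q : Q) (v : V) :
    inner ℝ (rieszRepr b q) v = b v q :=
  BilinForm.apply_toDual_symm_apply (hB := nondegenerate_innerₗ V) _ v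

end Riesz

theorem iSup_inner_div_norm {E : Type*} [NormedAddCommGroup E] [InnerProductSpace ℝ E]
    [Nontrivial E] (w : E) : ⨆ v : {v : E // v ≠ 0}, inner ℝ w v.1 / ‖v.1‖ = ‖w‖ := by
  have : Nonempty {v : E // v ≠ 0} := nonempty_subtype.2 (exists_ne 0)
  have hle : ∀ v : {v : E // v ≠ 0}, inner ℝ w v.1 / ‖v.1‖ ≤ ‖w‖ := fun v =>
    div_le_of_le_mul₀ (norm_nonneg _) (norm_nonneg _) (real_inner_le_norm w v.1)
  refine le_antisymm (ciSup_le hle) ?_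
  rcases eq_or_ne w 0 with rfl | hw
  · simp
  · calc ‖w‖ = inner ℝ w w / ‖w‖ := by
          rw [real_inner_self_eq_norm_sq, sq, mul_div_cancel_right₀ _ (norm_ne_zero_iff.2 hw)]
      _ ≤ _ := le_ciSup ⟨‖w‖, Set.forall_mem_range.2 hle⟩ (⟨w, hw⟩ : {v : E // v ≠ 0})

theorem iSup_bilin_div_norm_mul_norm {V Q : Type*} [NormedAddCommGroup V]
    [InnerProductSpace ℝ V] [FiniteDimensional ℝ V] [Nontrivial V]
    [NormedAddCommGroup Q] [Module ℝ Q] (b : V →ₗ[ℝ] Q →ₗ[ℝ] ℝ) (q : Q) :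
    ⨆ v : {v : V // v ≠ 0}, b v.1 q / (‖v.1‖ * ‖q‖) = ‖rieszRepr b q‖ / ‖q‖ := by
  simp only [← inner_rieszRepr_apply b q, div_mul_eq_div_div, div_eq_mul_inv _ ‖q‖,
    ← Real.iSup_mul_of_nonneg (inv_nonneg.2 (norm_nonneg q)), iSup_inner_div_norm]

theorem Real.sqrt_iInf_sq {ι : Sort*} [Nonempty ι] {f : ι → ℝ} (hf : ∀ i, 0 ≤ f i) :
    √(⨅ i, f i ^ 2) = ⨅ i, f i := by
  rw [Monotone.map_ciInf_of_continuousAt Real.continuous_sqrt.continuousAt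
    (fun _ _ => Real.sqrt_le_sqrt) ⟨0, Set.forall_mem_range.2 fun i => sq_nonneg (f i)⟩]
  simp only [Real.sqrt_sq (hf _)]

section Rayleigh

variable {𝕜 E : Type*} [RCLike 𝕜] [NormedAddCommGroup E] [InnerProductSpace 𝕜 E]

theorem LinearMap.IsPositive.iInf_rayleigh_le {T : E →ₗ[𝕜] E} (hT : T.IsPositive) {μ : 𝕜}
    (hμ : HasEigenvalue T μ) :
    ⨅ x : {x : E // x ≠ 0}, RCLike.re (inner 𝕜 (T x) x) / ‖(x : E)‖ ^ 2 ≤ RCLike.re μ := by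
  obtain ⟨x, hx⟩ := hμ.exists_hasEigenvector
  have hbdd : BddBelow (Set.range fun x : {x : E // x ≠ 0} =>
      RCLike.re (inner 𝕜 (T x) x) / ‖(x : E)‖ ^ 2) :=
    ⟨0, Set.forall_mem_range.2 fun x => div_nonneg (hT.re_inner_nonneg_left x) (sq_nonneg _)⟩
  refine (ciInf_le hbdd ⟨x, hx.2⟩).trans_eq ?_
  have : ‖x‖ ≠ 0 := norm_ne_zero_iff.2 hx.2
  simp [hx.apply_eq_smul, inner_smul_left, inner_self_eq_norm_sq_to_K, field]

theorem re_inner_adjoint_comp_self_div {F : Type*} [NormedAddCommGroup F] [InnerProductSpace 𝕜 F]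
    [FiniteDimensional 𝕜 E] [FiniteDimensional 𝕜 F] (S : E →ₗ[𝕜] F) (x : E) :
    RCLike.re (inner 𝕜 ((adjoint S ∘ₗ S) x) x) / ‖x‖ ^ 2 = (‖S x‖ / ‖x‖) ^ 2 := by
  rw [comp_apply, adjoint_inner_left, inner_self_eq_norm_sq, div_pow]

end Rayleigh

section Mixed

variable {V Q : Type*} [NormedAddCommGroup V] [InnerProductSpace ℝ V] [FiniteDimensional ℝ V]
  [NormedAddCommGroup Q] [InnerProductSpace ℝ Q] [FiniteDimensional ℝ Q]

def MixedEigenEquation (b : V →ₗ[ℝ] Q →ₗ[ℝ] ℝ) (μ : ℝ) (u : V) (p : Q) : Prop :=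
  ∀ (v : V) (q : Q), (inner ℝ u v : ℝ) + b v p + b u q = -μ * (inner ℝ p q : ℝ)

def IsMixedEigenvalue (b : V →ₗ[ℝ] Q →ₗ[ℝ] ℝ) (μ : ℝ) : Prop :=
  ∃ up : V × Q, up ≠ 0 ∧ MixedEigenEquation b μ up.1 up.2

theorem mixedEigenEquation_iff (b : V →ₗ[ℝ] Q →ₗ[ℝ] ℝ) (μ : ℝ) (u : V) (p : Q) :
    MixedEigenEquation b μ u p ↔
      u = -rieszRepr b p ∧ (adjoint (rieszRepr b) ∘ₗ rieszRepr b) p = μ • p := by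
  constructor
  · intro h
    have hu : u = -rieszRepr b p := ext_inner_right ℝ fun v => by
      simpa [inner_neg_left, eq_neg_iff_add_eq_zero] using h v 0
    refine ⟨hu, ext_inner_right ℝ fun q => ?_⟩
    have hq := h 0 q
    simp only [inner_zero_right, map_zero, zero_add, LinearMap.zero_apply] at hq
    rw [hu, ← inner_rieszRepr_apply, inner_neg_right, real_inner_comm] at hq
    rw [comp_apply, adjoint_inner_left, real_inner_smul_left]
    linarith
  · rintro ⟨rfl, hp⟩ v q
    have hq : b (-rieszRepr b p) q = -(μ * inner ℝ p q) := by
      rw [← inner_rieszRepr_apply, inner_neg_right, real_inner_comm, ← adjoint_inner_left,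
        ← comp_apply, hp, real_inner_smul_left]
    rw [hq, inner_neg_left, inner_rieszRepr_apply]
    ring

theorem isMixedEigenvalue_iff_hasEigenvalue (b : V →ₗ[ℝ] Q →ₗ[ℝ] ℝ) (μ : ℝ) :
    IsMixedEigenvalue b μ ↔ HasEigenvalue (adjoint (rieszRepr b) ∘ₗ rieszRepr b) μ := by
  constructor
  · rintro ⟨⟨u, p⟩, hup, h⟩
    obtain ⟨rfl, hp⟩ := (mixedEigenEquation_iff b μ u p).1 h
    have hp0 : p ≠ 0 := by rintro rfl; simp at hup
    exact hasEigenvalue_of_hasEigenvector ⟨mem_eigenspace_iff.2 hp, hp0⟩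
  · intro hμ
    obtain ⟨p, hp⟩ := hμ.exists_hasEigenvector
    exact ⟨(-rieszRepr b p, p), fun h => hp.2 (congrArg Prod.snd h),
      (mixedEigenEquation_iff b μ _ p).2 ⟨rfl, hp.apply_eq_smul⟩⟩

end Mixed

/-- The eigenvalues of the generalized eigenvalue problem
`⟨u,v⟩ + b(v,p) + b(u,q) = -λ⟨p,q⟩` form a nonempty set, are all nonnegative,
and the Brezzi inf-sup constant `β` equals the square root of the smallest one. -/
theorem brezzi_infsup_eq_sqrt_min_eigenvalue
    {V : Type*} [NormedAddCommGroup V] [InnerProductSpace ℝ V]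
    [FiniteDimensional ℝ V] [Nontrivial V]
    {Q : Type*} [NormedAddCommGroup Q] [InnerProductSpace ℝ Q]
    [FiniteDimensional ℝ Q] [Nontrivial Q]
    (b : V →ₗ[ℝ] Q →ₗ[ℝ] ℝ) :
    { μ : ℝ | ∃ up : V × Q, up ≠ 0 ∧
        ∀ (v : V) (q : Q),
          (inner ℝ up.1 v : ℝ) + b v up.2 + b up.1 q
            = -μ * (inner ℝ up.2 q : ℝ) }.Nonempty ∧
    (∀ μ : ℝ, (∃ up : V × Q, up ≠ 0 ∧
        ∀ (v : V) (q : Q),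
          (inner ℝ up.1 v : ℝ) + b v up.2 + b up.1 q
            = -μ * (inner ℝ up.2 q : ℝ)) → 0 ≤ μ) ∧
    (∃ μ₀ : ℝ,
      IsLeast
        { μ : ℝ | ∃ up : V × Q, up ≠ 0 ∧
            ∀ (v : V) (q : Q),
              (inner ℝ up.1 v : ℝ) + b v up.2 + b up.1 q
                = -μ * (inner ℝ up.2 q : ℝ) } μ₀ ∧
      (⨅ q : {q : Q // q ≠ 0}, ⨆ v : {v : V // v ≠ 0},
          b v.1 q.1 / (‖v.1‖ * ‖q.1‖)) = Real.sqrt μ₀) := by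
  set S := rieszRepr b
  have hμ₀ := (isSymmetric_adjoint_comp_self S).hasEigenvalue_iInf_of_finiteDimensional
  set μ₀ := ⨅ x : {x : Q // x ≠ 0}, RCLike.re (inner ℝ ((adjoint S ∘ₗ S) x) x) / ‖(x : Q)‖ ^ 2
  have hleast : IsLeast {μ | IsMixedEigenvalue b μ} μ₀ :=
    ⟨(isMixedEigenvalue_iff_hasEigenvalue b μ₀).2 hμ₀, fun μ hμ =>
      (isPositive_adjoint_comp_self S).iInf_rayleigh_le
        ((isMixedEigenvalue_iff_hasEigenvalue b μ).1 hμ)⟩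
  have hμ₀_eq : μ₀ = ⨅ q : {q : Q // q ≠ 0}, (‖S q‖ / ‖(q : Q)‖) ^ 2 := by
    simp only [μ₀, re_inner_adjoint_comp_self_div]
  refine ⟨⟨μ₀, hleast.1⟩, fun μ hμ => ?_, μ₀, hleast, ?_⟩
  · exact (hμ₀_eq ▸ Real.iInf_nonneg fun q => sq_nonneg _).trans (hleast.2 hμ)
  · have : Nonempty {q : Q // q ≠ 0} := nonempty_subtype.2 (exists_ne 0)
    rw [hμ₀_eq, Real.sqrt_iInf_sq fun q => by positivity]
    exact iInf_congr fun q => iSup_bilin_div_norm_mul_norm b q.1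
end

section
/- Consider the generalized eigenvalue problem: find λ ∈ ℝ and (u,p) ∈ V × Q with (u,p) ≠ (0,0) such that ⟨u,v⟩ + b(v,p) + b(u,q) = -λ⟨p,q⟩ for all (v,q) ∈ V × Q. If N ≠ Q, then the set of nonzero eigenvalues of this problem is nonempty and the reduced Brezzi inf-sup constant β̃ := inf over q ≠ 0 in the orthogonal complement of N in Q of sup over v ∈ V with v ≠ 0 of b(v,q)/(‖v‖·‖q‖) equals the square root of the smallest nonzero eigenvalue. -/
/-!
By the Riesz representation theorem `b v q = ⟪B q, v⟫` for a linear map `B : Q → V`, and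
`N = ker B`. Testing the eigenvalue problem with `q = 0` forces `u = -B p`; testing it with
`v = 0` then says that `μ` is an eigenvalue of `B† B` with eigenvector `p`. For `μ ≠ 0` such an
eigenvector lies in `Nᗮ`, on which `B† B` is positive definite, so the smallest nonzero eigenvalue
is the minimum of the Rayleigh quotient `‖B q‖² / ‖q‖²` over `Nᗮ`. By Cauchy–Schwarz the inner
supremum is `‖B q‖ / ‖q‖`, and the inf-sup constant is the square root of that minimum.
-/

open LinearMap
open scoped RealInnerProductSpace

namespace LinearMap

variable {E F : Type*} [NormedAddCommGroup E] [InnerProductSpace ℝ E]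
  [NormedAddCommGroup F] [InnerProductSpace ℝ F]

theorem map_ne_zero_of_mem_orthogonal_ker {B : E →ₗ[ℝ] F} {x : E} (hxK : x ∈ (ker B)ᗮ)
    (hx : x ≠ 0) : B x ≠ 0 :=
  fun h => hx ((ker B).orthogonal_disjoint.le_bot ⟨h, hxK⟩)

theorem norm_map_sq_eq_of_inner_map_eq {B : E →ₗ[ℝ] F} {μ : ℝ} {p : E}
    (hp : ∀ q, ⟪B p, B q⟫ = μ * ⟪p, q⟫) : ‖B p‖ ^ 2 = μ * ‖p‖ ^ 2 := by
  simpa only [real_inner_self_eq_norm_sq] using hp p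

theorem mem_orthogonal_ker_of_inner_map_eq {B : E →ₗ[ℝ] F} {μ : ℝ} (hμ : μ ≠ 0) {p : E}
    (hp : ∀ q, ⟪B p, B q⟫ = μ * ⟪p, q⟫) : p ∈ (ker B)ᗮ := by
  refine (Submodule.mem_orthogonal' _ _).mpr fun n hn => ?_
  have h := hp n
  rw [mem_ker.mp hn, inner_zero_right] at h
  exact (mul_eq_zero.mp h.symm).resolve_left hμ

theorem sqrt_le_norm_map_div_norm {B : E →ₗ[ℝ] F} {μ : ℝ} {y : E} (hy : y ≠ 0)
    (h : μ * ‖y‖ ^ 2 ≤ ‖B y‖ ^ 2) : √μ ≤ ‖B y‖ / ‖y‖ := by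
  have : 0 < ‖y‖ := norm_pos_iff.mpr hy
  rwa [Real.sqrt_le_left (by positivity), div_pow, le_div_iff₀ (by positivity)]

theorem norm_map_div_norm_eq_sqrt {B : E →ₗ[ℝ] F} {μ : ℝ} {y : E} (hy : y ≠ 0)
    (h : ‖B y‖ ^ 2 = μ * ‖y‖ ^ 2) : ‖B y‖ / ‖y‖ = √μ := by
  have : 0 < ‖y‖ := norm_pos_iff.mpr hy
  rw [show μ = (‖B y‖ / ‖y‖) ^ 2 by rw [div_pow, h, mul_div_cancel_right₀ _ (by positivity)],
    Real.sqrt_sq (by positivity)]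

/-- The nonzero eigenvalues of `B† ∘ₗ B`, in a weak form that does not mention the adjoint. -/
def nonzeroGramEigenvalues (B : E →ₗ[ℝ] F) : Set ℝ :=
  {μ | μ ≠ 0 ∧ ∃ p ≠ 0, ∀ q, ⟪B p, B q⟫ = μ * ⟪p, q⟫}

theorem isLeast_nonzeroGramEigenvalues {B : E →ₗ[ℝ] F} {μ : ℝ} {x : E} (hxK : x ∈ (ker B)ᗮ)
    (hx : x ≠ 0) (heig : ∀ y, ⟪B x, B y⟫ = μ * ⟪x, y⟫)
    (hmin : ∀ y ∈ (ker B)ᗮ, μ * ‖y‖ ^ 2 ≤ ‖B y‖ ^ 2) :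
    IsLeast (nonzeroGramEigenvalues B) μ := by
  refine ⟨⟨fun hμ => ?_, x, hx, heig⟩, ?_⟩
  · have h := norm_map_sq_eq_of_inner_map_eq heig
    rw [hμ, zero_mul, sq_eq_zero_iff, norm_eq_zero] at h
    exact map_ne_zero_of_mem_orthogonal_ker hxK hx h
  · rintro μ' ⟨hμ', p, hp, hpeig⟩
    have h := hmin p (mem_orthogonal_ker_of_inner_map_eq hμ' hpeig)
    rw [norm_map_sq_eq_of_inner_map_eq hpeig] at h
    exact le_of_mul_le_mul_right h (by positivity)

variable [FiniteDimensional ℝ E] [FiniteDimensional ℝ F]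

theorem exists_rayleigh_minimizer [Nontrivial E] (B : E →ₗ[ℝ] F) :
    ∃ μ : ℝ, ∃ x : E, x ≠ 0 ∧ (∀ y, ⟪B x, B y⟫ = μ * ⟪x, y⟫) ∧
      ∀ y, μ * ‖y‖ ^ 2 ≤ ‖B y‖ ^ 2 := by
  have hgram : ∀ x y, ⟪(adjoint B ∘ₗ B) x, y⟫ = ⟪B x, B y⟫ := fun x y =>
    adjoint_inner_left B y (B x)
  obtain ⟨x, hx⟩ := (IsSymmetric.hasEigenvalue_iInf_of_finiteDimensional
    B.isSymmetric_adjoint_comp_self).exists_hasEigenvector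
  simp only [hgram, RCLike.re_to_real, real_inner_self_eq_norm_sq, RCLike.ofReal_real_eq_id,
    id_eq] at hx
  refine ⟨⨅ y : {y : E // y ≠ 0}, ‖B y‖ ^ 2 / ‖(y : E)‖ ^ 2, x, hx.2, fun y => ?_, fun y => ?_⟩
  · rw [← hgram, hx.apply_eq_smul, real_inner_smul_left]
  · rcases eq_or_ne y 0 with rfl | hy
    · simp
    have hle : ⨅ z : {z : E // z ≠ 0}, ‖B z‖ ^ 2 / ‖(z : E)‖ ^ 2 ≤ ‖B y‖ ^ 2 / ‖y‖ ^ 2 :=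
      ciInf_le ⟨0, Set.forall_mem_range.mpr fun _ => by positivity⟩ (⟨y, hy⟩ : {z : E // z ≠ 0})
    rwa [le_div_iff₀ (by positivity)] at hle

theorem exists_rayleigh_minimizer_mem_orthogonal_ker (B : E →ₗ[ℝ] F) (hB : ker B ≠ ⊤) :
    ∃ μ : ℝ, ∃ x ∈ (ker B)ᗮ, x ≠ 0 ∧ (∀ y, ⟪B x, B y⟫ = μ * ⟪x, y⟫) ∧
      ∀ y ∈ (ker B)ᗮ, μ * ‖y‖ ^ 2 ≤ ‖B y‖ ^ 2 := by
  have : Nontrivial (ker B)ᗮ := Submodule.nontrivial_iff_ne_bot.mpr fun h =>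
    hB (Submodule.orthogonal_eq_bot_iff.mp h)
  obtain ⟨μ, x, hx, heig, hmin⟩ := exists_rayleigh_minimizer (B ∘ₗ (ker B)ᗮ.subtype)
  refine ⟨μ, x, x.2, by simpa using hx, fun y => ?_, fun y hy => hmin ⟨y, hy⟩⟩
  obtain ⟨n, hn, w, hw, rfl⟩ := (ker B).exists_add_mem_mem_orthogonal y
  have hxn : ⟪(x : E), n⟫ = 0 := Submodule.inner_left_of_mem_orthogonal hn x.2
  simpa [mem_ker.mp hn, inner_add_right, hxn] using heig ⟨w, hw⟩

end LinearMap

section Brezzi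

variable {V Q : Type*} [NormedAddCommGroup V] [InnerProductSpace ℝ V]
  [NormedAddCommGroup Q] [InnerProductSpace ℝ Q]

theorem iSup_inner_div_norm_mul_eq {w : V} (hw : w ≠ 0) {c : ℝ} (hc : 0 < c) :
    ⨆ v : {v : V // v ≠ 0}, ⟪w, v⟫ / (‖(v : V)‖ * c) = ‖w‖ / c := by
  have hbound : ∀ v : {v : V // v ≠ 0}, ⟪w, v⟫ / (‖(v : V)‖ * c) ≤ ‖w‖ / c := fun v => by
    have hv : 0 < ‖(v : V)‖ := norm_pos_iff.mpr v.2
    rw [div_le_div_iff₀ (by positivity) hc]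
    nlinarith [real_inner_le_norm w v]
  have hattained : ⟪w, w⟫ / (‖w‖ * c) = ‖w‖ / c := by
    rw [real_inner_self_eq_norm_sq]
    field_simp [norm_ne_zero_iff.mpr hw]
  have : Nonempty {v : V // v ≠ 0} := ⟨⟨w, hw⟩⟩
  exact le_antisymm (ciSup_le hbound)
    (hattained ▸ le_ciSup ⟨_, Set.forall_mem_range.mpr hbound⟩ (⟨w, hw⟩ : {v : V // v ≠ 0}))

variable [FiniteDimensional ℝ V]

noncomputable def rieszFlip (b : V →ₗ[ℝ] Q →ₗ[ℝ] ℝ) : Q →ₗ[ℝ] V where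
  toFun q := (InnerProductSpace.toDual ℝ V).symm (b.flip q).toContinuousLinearMap
  map_add' p q := by simp
  map_smul' r q := by simp

@[simp]
theorem inner_rieszFlip_apply (b : V →ₗ[ℝ] Q →ₗ[ℝ] ℝ) (q : Q) (v : V) :
    ⟪rieszFlip b q, v⟫ = b v q := by
  simp [rieszFlip, InnerProductSpace.toDual_symm_apply]

theorem ker_flip_eq_ker_rieszFlip (b : V →ₗ[ℝ] Q →ₗ[ℝ] ℝ) : ker b.flip = ker (rieszFlip b) := by
  ext q
  simp only [mem_ker, LinearMap.ext_iff, flip_apply, LinearMap.zero_apply,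
    ← inner_rieszFlip_apply b q]
  exact ⟨fun h => ext_inner_right ℝ (by simpa using h), fun h v => by simp [h]⟩

theorem saddle_eq_iff (b : V →ₗ[ℝ] Q →ₗ[ℝ] ℝ) (u : V) (p : Q) (μ : ℝ) :
    (∀ v q, ⟪u, v⟫ + b v p + b u q = -μ * ⟪p, q⟫) ↔
      u = -rieszFlip b p ∧ ∀ q, ⟪rieszFlip b p, rieszFlip b q⟫ = μ * ⟪p, q⟫ := by
  constructor
  · intro h
    have hu : u = -rieszFlip b p := by
      rw [eq_neg_iff_add_eq_zero]
      refine ext_inner_right ℝ fun v => ?_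
      simpa [inner_add_left] using h v 0
    refine ⟨hu, fun q => ?_⟩
    have hq : b u q = -μ * ⟪p, q⟫ := by simpa using h 0 q
    rw [← inner_rieszFlip_apply b q u, hu, inner_neg_right,
      real_inner_comm (rieszFlip b p)] at hq
    linarith
  · rintro ⟨rfl, h⟩ v q
    rw [← inner_rieszFlip_apply b p v, ← inner_rieszFlip_apply b q, inner_neg_left,
      inner_neg_right, real_inner_comm (rieszFlip b p), h]
    ring

theorem setOf_saddle_eigenvalues_eq (b : V →ₗ[ℝ] Q →ₗ[ℝ] ℝ) :
    {μ : ℝ | μ ≠ 0 ∧ ∃ up : V × Q, up ≠ 0 ∧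
      ∀ v q, ⟪up.1, v⟫ + b v up.2 + b up.1 q = -μ * ⟪up.2, q⟫} =
      nonzeroGramEigenvalues (rieszFlip b) := by
  ext μ
  refine and_congr_right fun _ => ⟨?_, ?_⟩
  · rintro ⟨⟨u, p⟩, hup, h⟩
    obtain ⟨rfl, hp⟩ := (saddle_eq_iff b u p μ).mp h
    exact ⟨p, fun hp0 => hup (by simp [hp0]), hp⟩
  · rintro ⟨p, hp0, hp⟩
    exact ⟨(-rieszFlip b p, p), fun h => hp0 (congrArg Prod.snd h),
      (saddle_eq_iff b _ p μ).mpr ⟨rfl, hp⟩⟩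

theorem iSup_div_eq_norm_rieszFlip_div (b : V →ₗ[ℝ] Q →ₗ[ℝ] ℝ) {q : Q}
    (hq : rieszFlip b q ≠ 0) :
    ⨆ v : {v : V // v ≠ 0}, b v q / (‖(v : V)‖ * ‖q‖) = ‖rieszFlip b q‖ / ‖q‖ := by
  simp_rw [← inner_rieszFlip_apply b q]
  exact iSup_inner_div_norm_mul_eq hq (norm_pos_iff.mpr fun h => hq (by simp [h]))

end Brezzi

theorem reduced_brezzi_infsup_eq_sqrt_min_nonzero_eigenvalue_general
    {V : Type*} [NormedAddCommGroup V] [InnerProductSpace ℝ V]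
    [FiniteDimensional ℝ V]
    {Q : Type*} [NormedAddCommGroup Q] [InnerProductSpace ℝ Q]
    [FiniteDimensional ℝ Q]
    (b : V →ₗ[ℝ] Q →ₗ[ℝ] ℝ)
    (hN : LinearMap.ker b.flip ≠ (⊤ : Submodule ℝ Q)) :
    { μ : ℝ | μ ≠ 0 ∧ ∃ up : V × Q, up ≠ 0 ∧
        ∀ (v : V) (q : Q),
          (inner ℝ up.1 v : ℝ) + b v up.2 + b up.1 q
            = -μ * (inner ℝ up.2 q : ℝ) }.Nonempty ∧
    (∃ μ₀ : ℝ,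
      IsLeast
        { μ : ℝ | μ ≠ 0 ∧ ∃ up : V × Q, up ≠ 0 ∧
            ∀ (v : V) (q : Q),
              (inner ℝ up.1 v : ℝ) + b v up.2 + b up.1 q
                = -μ * (inner ℝ up.2 q : ℝ) } μ₀ ∧
      (⨅ q : {q : Q // q ∈ (LinearMap.ker b.flip)ᗮ ∧ q ≠ 0},
          ⨆ v : {v : V // v ≠ 0},
            b v.1 q.1 / (‖v.1‖ * ‖q.1‖)) = Real.sqrt μ₀) := by
  rw [ker_flip_eq_ker_rieszFlip] at hN ⊢
  rw [setOf_saddle_eigenvalues_eq]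
  set B := rieszFlip b
  obtain ⟨μ₀, p₀, hp₀K, hp₀, heig, hmin⟩ := exists_rayleigh_minimizer_mem_orthogonal_ker B hN
  have hleast := isLeast_nonzeroGramEigenvalues hp₀K hp₀ heig hmin
  refine ⟨hleast.nonempty, μ₀, hleast, ?_⟩
  have hsup (q : {q : Q // q ∈ (ker B)ᗮ ∧ q ≠ 0}) :
      ⨆ v : {v : V // v ≠ 0}, b v q / (‖(v : V)‖ * ‖(q : Q)‖) = ‖B q‖ / ‖(q : Q)‖ :=
    iSup_div_eq_norm_rieszFlip_div b (map_ne_zero_of_mem_orthogonal_ker q.2.1 q.2.2)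
  have hlower (q : {q : Q // q ∈ (ker B)ᗮ ∧ q ≠ 0}) : √μ₀ ≤ ‖B q‖ / ‖(q : Q)‖ :=
    sqrt_le_norm_map_div_norm q.2.2 (hmin q q.2.1)
  have hattained : ‖B p₀‖ / ‖p₀‖ = √μ₀ :=
    norm_map_div_norm_eq_sqrt hp₀ (norm_map_sq_eq_of_inner_map_eq heig)
  have : Nonempty {q : Q // q ∈ (ker B)ᗮ ∧ q ≠ 0} := ⟨⟨p₀, hp₀K, hp₀⟩⟩
  rw [iInf_congr hsup]
  exact le_antisymm (hattained ▸ ciInf_le ⟨_, Set.forall_mem_range.mpr hlower⟩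
    (⟨p₀, hp₀K, hp₀⟩ : {q : Q // q ∈ (ker B)ᗮ ∧ q ≠ 0})) (le_ciInf hlower)

/-- If the space of spurious modes `N = {q | b(v,q) = 0 ∀ v}` is a proper subspace
of `Q`, then the generalized eigenvalue problem
`⟨u,v⟩ + b(v,p) + b(u,q) = -λ⟨p,q⟩` has a nonzero eigenvalue, and the reduced
Brezzi inf-sup constant (infimum over nonzero `q` in the orthogonal complement of
`N`) equals the square root of the smallest nonzero eigenvalue. -/
theorem reduced_brezzi_infsup_eq_sqrt_min_nonzero_eigenvalue
    {V : Type*} [NormedAddCommGroup V] [InnerProductSpace ℝ V]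
    [FiniteDimensional ℝ V] [Nontrivial V]
    {Q : Type*} [NormedAddCommGroup Q] [InnerProductSpace ℝ Q]
    [FiniteDimensional ℝ Q] [Nontrivial Q]
    (b : V →ₗ[ℝ] Q →ₗ[ℝ] ℝ)
    (hN : LinearMap.ker b.flip ≠ (⊤ : Submodule ℝ Q)) :
    { μ : ℝ | μ ≠ 0 ∧ ∃ up : V × Q, up ≠ 0 ∧
        ∀ (v : V) (q : Q),
          (inner ℝ up.1 v : ℝ) + b v up.2 + b up.1 q
            = -μ * (inner ℝ up.2 q : ℝ) }.Nonempty ∧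
    (∃ μ₀ : ℝ,
      IsLeast
        { μ : ℝ | μ ≠ 0 ∧ ∃ up : V × Q, up ≠ 0 ∧
            ∀ (v : V) (q : Q),
              (inner ℝ up.1 v : ℝ) + b v up.2 + b up.1 q
                = -μ * (inner ℝ up.2 q : ℝ) } μ₀ ∧
      (⨅ q : {q : Q // q ∈ (LinearMap.ker b.flip)ᗮ ∧ q ≠ 0},
          ⨆ v : {v : V // v ≠ 0},
            b v.1 q.1 / (‖v.1‖ * ‖q.1‖)) = Real.sqrt μ₀) :=
  reduced_brezzi_infsup_eq_sqrt_min_nonzero_eigenvalue_general b hN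
end

section
/- Suppose λ ∈ ℝ and u ∈ Z with u ≠ 0 satisfy a(u,v) = λ⟨u,v⟩ for all v ∈ Z. Then there exists p ∈ Q such that a(u,v) + b(v,p) + b(u,q) = λ⟨u,v⟩ for all (v,q) ∈ V × Q. -/
/-!
The residual `v ↦ a(u,v) - λ⟨u,v⟩` is a linear functional on `V` vanishing on `Z`, the kernel of
`v ↦ b(v,·)`. By duality it therefore factors through that map, i.e. it is `v ↦ b(v,p₀)` for some
`p₀` in the (reflexive) space `Q`, and `p = -p₀` works; `b(u,q) = 0` because `u ∈ Z`.
-/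

namespace LinearMap

theorem exists_flip_eq_of_ker_le_ker {K V W : Type*} [Field K] [AddCommGroup V] [Module K V]
    [AddCommGroup W] [Module K W] [FiniteDimensional K W] (b : V →ₗ[K] W →ₗ[K] K)
    {f : V →ₗ[K] K} (h : ker b ≤ ker f) : ∃ p : W, b.flip p = f := by
  have hf : f ∈ range b.dualMap := by
    rw [range_dualMap_eq_dualAnnihilator_ker, Submodule.mem_dualAnnihilator]
    exact fun v hv => h hv
  obtain ⟨g, rfl⟩ := hf
  exact ⟨(Module.evalEquiv K W).symm g, ext fun v => Module.apply_evalEquiv_symm_apply K W (b v) g⟩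

end LinearMap

theorem exists_pressure_extension_of_kernel_eigenpair_general
    {V : Type*} [NormedAddCommGroup V] [InnerProductSpace ℝ V]
    {Q : Type*} [NormedAddCommGroup Q] [InnerProductSpace ℝ Q]
    [FiniteDimensional ℝ Q]
    (a : V →ₗ[ℝ] V →ₗ[ℝ] ℝ)
    (b : V →ₗ[ℝ] Q →ₗ[ℝ] ℝ)
    (μ : ℝ) (u : V) (huZ : ∀ q : Q, b u q = 0)
    (heig : ∀ v : V, (∀ q : Q, b v q = 0) → a u v = μ * (inner ℝ u v : ℝ)) :
    ∃ p : Q, ∀ (v : V) (q : Q),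
      a u v + b v p + b u q = μ * (inner ℝ u v : ℝ) := by
  have hker : LinearMap.ker b ≤ LinearMap.ker (a u - μ • innerₗ V u) := fun v hv => by
    have hvZ : ∀ q, b v q = 0 := fun q => LinearMap.congr_fun (LinearMap.mem_ker.mp hv) q
    simp [heig v hvZ]
  obtain ⟨p, hp⟩ := b.exists_flip_eq_of_ker_le_ker hker
  refine ⟨-p, fun v q => ?_⟩
  have hpv : b v p = a u v - μ * inner ℝ u v := by simpa using LinearMap.congr_fun hp v
  rw [map_neg, hpv, huZ q]
  ring

/-- If `(λ, u)` is an eigenpair of the eigenvalue problem `a(u,v) = λ⟨u,v⟩` on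
`Z = {u | b(u,q) = 0 ∀ q}`, then there exists `p ∈ Q` such that `(λ, (u,p))` is
an eigenpair of the extended problem
`a(u,v) + b(v,p) + b(u,q) = λ⟨u,v⟩` over `V × Q`. -/
theorem exists_pressure_extension_of_kernel_eigenpair
    {V : Type*} [NormedAddCommGroup V] [InnerProductSpace ℝ V]
    [FiniteDimensional ℝ V] [Nontrivial V]
    {Q : Type*} [NormedAddCommGroup Q] [InnerProductSpace ℝ Q]
    [FiniteDimensional ℝ Q] [Nontrivial Q]
    (a : V →ₗ[ℝ] V →ₗ[ℝ] ℝ) (ha : ∀ u v, a u v = a v u)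
    (b : V →ₗ[ℝ] Q →ₗ[ℝ] ℝ)
    (μ : ℝ) (u : V) (hu : u ≠ 0) (huZ : ∀ q : Q, b u q = 0)
    (heig : ∀ v : V, (∀ q : Q, b v q = 0) → a u v = μ * (inner ℝ u v : ℝ)) :
    ∃ p : Q, ∀ (v : V) (q : Q),
      a u v + b v p + b u q = μ * (inner ℝ u v : ℝ) :=
  exists_pressure_extension_of_kernel_eigenpair_general a b μ u huZ heig
end

section
/- Let λ ∈ ℝ and (u,p) ∈ V × Q with (u,p) ≠ (0,0). Then (λ,(u,p)) is an eigenpair of Eigenproblem (I) if and only if λ ≠ 1 and (λ(1-λ)⁻¹, (u,(1-λ)p)) is an eigenpair of Eigenproblem (II). Moreover, in that case 0 ≤ λ < 1, λ(1-λ)⁻¹ ≥ 0, p ≠ 0 and (1-λ)p ≠ 0. -/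
/-!
Testing with `v = 0` shows that each eigenproblem pins down `d u` by the Riesz representation
in `Q`: `d u = -λ p` in (I) and `d u = -λ̂ p̂` in (II). Testing with `q = 0` and substituting
this value of `d u` leaves the same condition `⟨u, v⟩ + (1 - λ)⟨d v, p⟩ = 0` in both problems
once `p̂ = (1 - λ) p` and `λ̂ p̂ = λ p`, which is the equivalence. Taking `v = u` in that
condition gives `‖u‖² = λ (1 - λ) ‖p‖²`, whence `p ≠ 0` (as `(u, p) ≠ 0`) and `0 ≤ λ < 1`
(as `λ = 1` would force `u = 0` and then `p = -d u = 0`).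
-/

open scoped RealInnerProductSpace

section Eigenproblems

variable {V Q : Type*} [NormedAddCommGroup V] [InnerProductSpace ℝ V]
  [NormedAddCommGroup Q] [InnerProductSpace ℝ Q] (d : V →ₗ[ℝ] Q)

def SolvesEigenproblemI (μ : ℝ) (u : V) (p : Q) : Prop :=
  ∀ (v : V) (q : Q), ⟪u, v⟫ + ⟪d u, d v⟫ + ⟪d v, p⟫ + ⟪d u, q⟫ = -μ * ⟪p, q⟫

def SolvesEigenproblemII (μ : ℝ) (u : V) (p : Q) : Prop :=
  ∀ (v : V) (q : Q), ⟪u, v⟫ + ⟪d v, p⟫ + ⟪d u, q⟫ = -μ * ⟪p, q⟫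

variable {d}

theorem eq_neg_smul_iff_forall_inner {x y : Q} {μ : ℝ} :
    x = -(μ • y) ↔ ∀ q : Q, ⟪x, q⟫ = -μ * ⟪y, q⟫ := by
  constructor
  · rintro rfl q
    rw [inner_neg_left, real_inner_smul_left, neg_mul]
  · intro h
    refine ext_inner_right ℝ fun q => ?_
    rw [h, inner_neg_left, real_inner_smul_left, neg_mul]

theorem solvesEigenproblemI_iff {μ : ℝ} {u : V} {p : Q} :
    SolvesEigenproblemI d μ u p ↔
      d u = -(μ • p) ∧ ∀ v : V, ⟪u, v⟫ + ⟪d v, (1 - μ) • p⟫ = 0 := by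
  rw [eq_neg_smul_iff_forall_inner]
  constructor
  · intro h
    have hdu : ∀ q, ⟪d u, q⟫ = -μ * ⟪p, q⟫ := fun q => by simpa using h 0 q
    refine ⟨hdu, fun v => ?_⟩
    have hv := h v 0
    rw [hdu, real_inner_comm (d v) p] at hv
    simp only [inner_zero_right, mul_zero, add_zero] at hv
    rw [real_inner_smul_right]
    linarith
  · rintro ⟨hdu, hv⟩ v q
    have hv' := hv v
    rw [real_inner_smul_right] at hv'
    rw [hdu, hdu, real_inner_comm (d v) p]
    linarith

theorem solvesEigenproblemII_iff {μ : ℝ} {u : V} {p : Q} :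
    SolvesEigenproblemII d μ u p ↔ d u = -(μ • p) ∧ ∀ v : V, ⟪u, v⟫ + ⟪d v, p⟫ = 0 := by
  rw [eq_neg_smul_iff_forall_inner]
  constructor
  · intro h
    exact ⟨fun q => by simpa using h 0 q, fun v => by simpa using h v 0⟩
  · rintro ⟨hdu, hv⟩ v q
    rw [hdu, hv, zero_add]

theorem inner_self_eq_of_solvesEigenproblemI {μ : ℝ} {u : V} {p : Q}
    (h : SolvesEigenproblemI d μ u p) : ⟪u, u⟫ = μ * (1 - μ) * ⟪p, p⟫ := by
  obtain ⟨hdu, hv⟩ := solvesEigenproblemI_iff.mp h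
  have huu := hv u
  rw [hdu, real_inner_smul_right, inner_neg_left, real_inner_smul_left] at huu
  linarith

theorem ne_zero_of_solvesEigenproblemI {μ : ℝ} {u : V} {p : Q} (h0 : (u, p) ≠ 0)
    (h : SolvesEigenproblemI d μ u p) : p ≠ 0 := by
  rintro rfl
  have hu : u = 0 := by simpa using inner_self_eq_of_solvesEigenproblemI h
  exact h0 (by rw [hu, Prod.mk_zero_zero])

theorem mem_Ico_of_solvesEigenproblemI {μ : ℝ} {u : V} {p : Q} (h0 : (u, p) ≠ 0)
    (h : SolvesEigenproblemI d μ u p) : μ ∈ Set.Ico 0 1 := by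
  have hp := ne_zero_of_solvesEigenproblemI h0 h
  have huu := inner_self_eq_of_solvesEigenproblemI h
  have hpp : 0 < ⟪p, p⟫ := real_inner_self_pos.mpr hp
  have hμ : 0 ≤ μ * (1 - μ) :=
    nonneg_of_mul_nonneg_left (huu ▸ real_inner_self_nonneg) hpp
  have hμ1 : μ ≠ 1 := by
    rintro rfl
    have hu : u = 0 := by simpa using huu
    have hdu := (solvesEigenproblemI_iff.mp h).1
    rw [hu, map_zero, one_smul, zero_eq_neg] at hdu
    exact hp hdu
  have hlt : μ < 1 := lt_of_le_of_ne (by nlinarith) hμ1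
  exact ⟨by nlinarith, hlt⟩

theorem solvesEigenproblemII_iff_solvesEigenproblemI {μ : ℝ} {u : V} {p : Q} (hμ : μ ≠ 1) :
    SolvesEigenproblemII d (μ * (1 - μ)⁻¹) u ((1 - μ) • p) ↔ SolvesEigenproblemI d μ u p := by
  rw [solvesEigenproblemI_iff, solvesEigenproblemII_iff, smul_smul,
    inv_mul_cancel_right₀ (sub_ne_zero.mpr hμ.symm)]

end Eigenproblems

/-- `(λ,(u,p))` is an eigenpair of Eigenproblem (I)
`⟨u,v⟩ + ⟨du,dv⟩ + ⟨dv,p⟩ + ⟨du,q⟩ = -λ⟨p,q⟩`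
if and only if `λ ≠ 1` and `(λ(1-λ)⁻¹, (u,(1-λ)p))` is an eigenpair of
Eigenproblem (II) `⟨û,v⟩ + ⟨dv,p̂⟩ + ⟨dû,q⟩ = -λ̂⟨p̂,q⟩`.  Moreover in that case
`0 ≤ λ < 1`, `λ(1-λ)⁻¹ ≥ 0`, `p ≠ 0` and `(1-λ)p ≠ 0`. -/
theorem eigenproblemI_iff_eigenproblemII
    {V : Type*} [NormedAddCommGroup V] [InnerProductSpace ℝ V]
    {Q : Type*} [NormedAddCommGroup Q] [InnerProductSpace ℝ Q]
    (d : V →ₗ[ℝ] Q) (μ : ℝ) (u : V) (p : Q) (h0 : (u, p) ≠ (0 : V × Q)) :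
    ((∀ (v : V) (q : Q),
        (inner ℝ u v : ℝ) + (inner ℝ (d u) (d v) : ℝ) + (inner ℝ (d v) p : ℝ)
            + (inner ℝ (d u) q : ℝ)
          = -μ * (inner ℝ p q : ℝ))
      ↔ (μ ≠ 1 ∧ (u, (1 - μ) • p) ≠ (0 : V × Q) ∧
          ∀ (v : V) (q : Q),
            (inner ℝ u v : ℝ) + (inner ℝ (d v) ((1 - μ) • p) : ℝ)
                + (inner ℝ (d u) q : ℝ)
              = -(μ * (1 - μ)⁻¹) * (inner ℝ ((1 - μ) • p) q : ℝ)))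
    ∧ ((∀ (v : V) (q : Q),
        (inner ℝ u v : ℝ) + (inner ℝ (d u) (d v) : ℝ) + (inner ℝ (d v) p : ℝ)
            + (inner ℝ (d u) q : ℝ)
          = -μ * (inner ℝ p q : ℝ)) →
        0 ≤ μ ∧ μ < 1 ∧ 0 ≤ μ * (1 - μ)⁻¹ ∧ p ≠ 0 ∧ (1 - μ) • p ≠ 0) := by
  have consequences (hI : SolvesEigenproblemI d μ u p) :
      0 ≤ μ ∧ μ < 1 ∧ 0 ≤ μ * (1 - μ)⁻¹ ∧ p ≠ 0 ∧ (1 - μ) • p ≠ 0 := by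
    obtain ⟨hμ0, hμ1⟩ := mem_Ico_of_solvesEigenproblemI h0 hI
    have hp := ne_zero_of_solvesEigenproblemI h0 hI
    have hμ1' : 0 < 1 - μ := sub_pos.mpr hμ1
    exact ⟨hμ0, hμ1, by positivity, hp, smul_ne_zero hμ1'.ne' hp⟩
  refine ⟨⟨fun hI => ?_, fun ⟨hμ, _, hII⟩ => ?_⟩, consequences⟩
  · obtain ⟨-, hμ1, -, -, hp⟩ := consequences hI
    exact ⟨hμ1.ne, fun h => hp (Prod.mk_eq_zero.mp h).2,
      (solvesEigenproblemII_iff_solvesEigenproblemI hμ1.ne).mpr hI⟩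
  · exact (solvesEigenproblemII_iff_solvesEigenproblemI hμ).mp hII
end

section
/- If (λ,(u,p)) is an eigenpair of Eigenproblem (I), then p ≠ 0, ‖u‖² = λ(1-λ)‖p‖², and 0 ≤ λ < 1. -/
/-!
Testing with `v = 0` gives `d u = -μ p`; testing with `q = 0` then gives
`⟪u, v⟫ + (1 - μ) ⟪d v, p⟫ = 0` for all `v`, and `v = u` yields `‖u‖² = μ (1 - μ) ‖p‖²`.
If `p = 0` the same identity makes `u` orthogonal to everything. Otherwise `μ (1 - μ) ≥ 0`, and
`μ = 1` would give `u = 0`, hence `p = -d u = 0`.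
-/

open scoped RealInnerProductSpace

section

variable {V : Type*} [NormedAddCommGroup V] [InnerProductSpace ℝ V]
  {Q : Type*} [NormedAddCommGroup Q] [InnerProductSpace ℝ Q]

/-- Nontriviality `(u, p) ≠ 0` is not part of this predicate. -/
def IsEigenpairI (d : V →ₗ[ℝ] Q) (μ : ℝ) (u : V) (p : Q) : Prop :=
  ∀ (v : V) (q : Q), ⟪u, v⟫ + ⟪d u, d v⟫ + ⟪d v, p⟫ + ⟪d u, q⟫ = -μ * ⟪p, q⟫

namespace IsEigenpairI

variable {d : V →ₗ[ℝ] Q} {μ : ℝ} {u : V} {p : Q}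

theorem apply_eq (h : IsEigenpairI d μ u p) : d u = -μ • p := by
  refine ext_inner_right ℝ fun q => ?_
  have hq := h 0 q
  simp only [map_zero, inner_zero_right, inner_zero_left, zero_add] at hq
  rw [hq, real_inner_smul_left]

theorem inner_add_mul_inner_eq_zero (h : IsEigenpairI d μ u p) (v : V) :
    ⟪u, v⟫ + (1 - μ) * ⟪d v, p⟫ = 0 := by
  have hv := h v 0
  rw [h.apply_eq, real_inner_smul_left, real_inner_comm _ p, inner_zero_right, inner_zero_right,
    mul_zero] at hv
  linarith

theorem norm_sq_eq (h : IsEigenpairI d μ u p) : ‖u‖ ^ 2 = μ * (1 - μ) * ‖p‖ ^ 2 := by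
  have hu := h.inner_add_mul_inner_eq_zero u
  rw [real_inner_self_eq_norm_sq, h.apply_eq, real_inner_smul_left,
    real_inner_self_eq_norm_sq] at hu
  linarith

theorem snd_ne_zero (h : IsEigenpairI d μ u p) (h0 : (u, p) ≠ (0 : V × Q)) : p ≠ 0 := by
  rintro rfl
  have hu : u = 0 := ext_inner_right ℝ fun v => by
    simpa using h.inner_add_mul_inner_eq_zero v
  exact h0 (by simp [hu])

theorem ne_one (h : IsEigenpairI d μ u p) (hp : p ≠ 0) : μ ≠ 1 := by
  rintro rfl
  have hu : u = 0 := by simpa using h.norm_sq_eq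
  have hdu := h.apply_eq
  rw [hu, map_zero, eq_comm, neg_smul, one_smul, neg_eq_zero] at hdu
  exact hp hdu

theorem mem_Ico (h : IsEigenpairI d μ u p) (hp : p ≠ 0) : μ ∈ Set.Ico 0 1 := by
  have hp2 : 0 < ‖p‖ ^ 2 := by positivity
  have hμ : 0 ≤ μ * (1 - μ) := by
    refine nonneg_of_mul_nonneg_left ?_ hp2
    rw [← h.norm_sq_eq]
    positivity
  have hμ1 := h.ne_one hp
  constructor <;> cases lt_or_gt_of_ne hμ1 <;> nlinarith

end IsEigenpairI

end

/-- If `(λ,(u,p))` is an eigenpair of Eigenproblem (I)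
`⟨u,v⟩ + ⟨du,dv⟩ + ⟨dv,p⟩ + ⟨du,q⟩ = -λ⟨p,q⟩`, then `p ≠ 0`,
`‖u‖² = λ(1-λ)‖p‖²` and `0 ≤ λ < 1`. -/
theorem eigenproblemI_norm_identity
    {V : Type*} [NormedAddCommGroup V] [InnerProductSpace ℝ V]
    {Q : Type*} [NormedAddCommGroup Q] [InnerProductSpace ℝ Q]
    (d : V →ₗ[ℝ] Q) (μ : ℝ) (u : V) (p : Q) (h0 : (u, p) ≠ (0 : V × Q))
    (heig : ∀ (v : V) (q : Q),
      (inner ℝ u v : ℝ) + (inner ℝ (d u) (d v) : ℝ) + (inner ℝ (d v) p : ℝ)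
          + (inner ℝ (d u) q : ℝ)
        = -μ * (inner ℝ p q : ℝ)) :
    p ≠ 0 ∧ ‖u‖ ^ 2 = μ * (1 - μ) * ‖p‖ ^ 2 ∧ 0 ≤ μ ∧ μ < 1 := by
  have h : IsEigenpairI d μ u p := heig
  have hp := h.snd_ne_zero h0
  obtain ⟨hμ0, hμ1⟩ := h.mem_Ico hp
  exact ⟨hp, h.norm_sq_eq, hμ0, hμ1⟩
end

section
/- If (u,p) ∈ V × Q satisfies ⟨u,v⟩ + ⟨du,dv⟩ + ⟨dv,p⟩ + ⟨du,q⟩ = -⟨p,q⟩ for all (v,q) ∈ V × Q (i.e., the relation of Eigenproblem (I) with λ = 1), then u = 0 and p = 0. In particular, λ = 1 is not an eigenvalue of Eigenproblem (I). -/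
/-! Testing with `v = 0` gives `⟨du + p, q⟩ = 0` for all `q`, so `p = -du`; then testing with
`q = 0` the `d`-terms cancel, leaving `⟨u, v⟩ = 0` for all `v`. -/

/-- If `(u,p)` satisfies the relation of Eigenproblem (I) with `λ = 1`, i.e.
`⟨u,v⟩ + ⟨du,dv⟩ + ⟨dv,p⟩ + ⟨du,q⟩ = -⟨p,q⟩` for all `(v,q)`, then `u = 0` and
`p = 0`; in particular `λ = 1` is not an eigenvalue of Eigenproblem (I). -/
theorem eigenproblemI_one_not_eigenvalue
    {V : Type*} [NormedAddCommGroup V] [InnerProductSpace ℝ V]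
    {Q : Type*} [NormedAddCommGroup Q] [InnerProductSpace ℝ Q]
    (d : V →ₗ[ℝ] Q) (u : V) (p : Q)
    (heig : ∀ (v : V) (q : Q),
      (inner ℝ u v : ℝ) + (inner ℝ (d u) (d v) : ℝ) + (inner ℝ (d v) p : ℝ)
          + (inner ℝ (d u) q : ℝ)
        = -(inner ℝ p q : ℝ)) :
    u = 0 ∧ p = 0 := by
  have hp : p = -d u := ext_inner_right ℝ fun q => by
    have := heig 0 q
    simp only [map_zero, inner_zero_left, inner_zero_right, zero_add] at this
    rw [inner_neg_left, this, neg_neg]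
  have hu : u = 0 := ext_inner_right ℝ fun v => by
    have := heig v 0
    rw [hp, inner_neg_right, real_inner_comm (d u)] at this
    simpa using this
  exact ⟨hu, by rw [hp, hu, map_zero, neg_zero]⟩
end
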